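/- In the presented group W̃, let t = w2·σ13·σ12. An element g ∈ W̃ commutes with t if and only if g = t^m for some integer m; i.e., the centralizer of t in W̃ is the cyclic subgroup generated by t. -/

import Mathlib

/-- The abstract generators of the extended Weyl group `W̃`. -/
inductive Gen | w1 | w2 | w3 | s12 | s13

open FreeGroup in
/-- The defining relators of the extended Weyl group `W̃`. -/
def rels : Set (FreeGroup Gen) :=
  {(of .w1) ^ 2, (of .w2) ^ 2, (of .w3) ^ 2, (of .s12) ^ 2, (of .s13) ^ 2,
   (of .s12 * of .s13) ^ 3,
   of .s12 * of .w1 * of .s12 * (of .w2)⁻¹,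
   of .s12 * of .w2 * of .s12 * (of .w1)⁻¹,
   of .s12 * of .w3 * of .s12 * (of .w3)⁻¹,
   of .s13 * of .w1 * of .s13 * (of .w3)⁻¹,
   of .s13 * of .w2 * of .s13 * (of .w2)⁻¹,
   of .s13 * of .w3 * of .s13 * (of .w1)⁻¹}

/-- The extended Weyl group `W̃` of hyperbolic type, given by generators and relations. -/
abbrev Wtilde := PresentedGroup rels

/-- The element `t = w2·σ13·σ12` of `W̃` corresponding to the Hietarinta–Viallet
equation. -/
def t : Wtilde :=
  PresentedGroup.of Gen.w2 * PresentedGroup.of Gen.s13 * PresentedGroup.of Gen.s12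

namespace HVaux

abbrev P3 := Equiv.Perm (Fin 3)

def sa : P3 := Equiv.swap 0 1
def sb : P3 := Equiv.swap 0 2
def pp : P3 := sb * sa

def consR (i : Fin 3) : List (Fin 3) → List (Fin 3)
  | [] => [i]
  | j :: l => if j = i then l else i :: j :: l

abbrev Ch (l : List (Fin 3)) : Prop := l.Chain' (· ≠ ·)

lemma ch_consR (i : Fin 3) {l : List (Fin 3)} (h : Ch l) : Ch (consR i l) := by
  match l with
  | [] => simp [consR, Ch, List.Chain']
  | j :: l' =>
    by_cases hji : j = i
    · simp only [consR, if_pos hji]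
      exact h.tail
    · simp only [consR, if_neg hji]
      exact List.IsChain.cons_cons (Ne.symm hji) h

lemma consR_consR (i : Fin 3) {l : List (Fin 3)} (h : Ch l) : consR i (consR i l) = l := by
  match l with
  | [] => simp [consR]
  | j :: l' =>
    by_cases hji : j = i
    · subst hji
      simp only [consR, if_pos rfl]
      match l', h with
      | [], _ => simp [consR]
      | k :: l'', h =>
        have hk : j ≠ k := (List.isChain_cons_cons.mp h).1
        simp [consR, Ne.symm hk]
    · simp [consR, if_neg hji, hji]

lemma map_consR (σ : P3) (i : Fin 3) (l : List (Fin 3)) :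
    (consR i l).map σ = consR (σ i) (l.map σ) := by
  match l with
  | [] => simp [consR]
  | j :: l' =>
    by_cases hji : j = i
    · simp [consR, hji]
    · have : ¬ σ j = σ i := fun h => hji (σ.injective h)
      simp [consR, hji, this]

lemma ch_map (σ : P3) {l : List (Fin 3)} (h : Ch l) : Ch (l.map σ) :=
  (List.isChain_map ⇑σ).mpr (h.imp fun a b hab he => hab (σ.injective he))

abbrev X : Type := {l : List (Fin 3) // Ch l} × P3

lemma Xext {x y : X} (h1 : x.1.1 = y.1.1) (h2 : x.2 = y.2) : x = y := by
  obtain ⟨⟨l, hl⟩, τ⟩ := x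
  obtain ⟨⟨m, hm⟩, σ⟩ := y
  simp_all

def wAct (i : Fin 3) : Equiv.Perm X where
  toFun x := (⟨consR i x.1.1, ch_consR i x.1.2⟩, x.2)
  invFun x := (⟨consR i x.1.1, ch_consR i x.1.2⟩, x.2)
  left_inv x := Xext (consR_consR i x.1.2) rfl
  right_inv x := Xext (consR_consR i x.1.2) rfl

def pAct (σ : P3) : Equiv.Perm X where
  toFun x := (⟨x.1.1.map σ, ch_map σ x.1.2⟩, σ * x.2)
  invFun x := (⟨x.1.1.map ⇑(σ⁻¹), ch_map σ⁻¹ x.1.2⟩, σ⁻¹ * x.2)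
  left_inv x := Xext
    (by simp [List.map_map, Equiv.Perm.inv_def, Equiv.symm_comp_self]) (by simp)
  right_inv x := Xext
    (by simp [List.map_map, Equiv.Perm.inv_def, Equiv.self_comp_symm]) (by simp)

lemma pAct_mul (σ τ : P3) : pAct (σ * τ) = pAct σ * pAct τ :=
  Equiv.ext fun x => Xext
    (by simp [pAct, Equiv.Perm.mul_apply, List.map_map, Function.comp_def])
    (by simp [pAct, Equiv.Perm.mul_apply, mul_assoc])



def fgen : Gen → Equiv.Perm X
  | .w1 => wAct 0
  | .w2 => wAct 1
  | .w3 => wAct 2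
  | .s12 => pAct sa
  | .s13 => pAct sb

lemma wAct_sq (i : Fin 3) : wAct i * wAct i = 1 :=
  Equiv.ext fun x => Xext (consR_consR i x.1.2) rfl

lemma pAct_one : pAct 1 = 1 := Equiv.ext fun x => Xext (by simp [pAct]) (by simp [pAct])

lemma relw (σ : P3) (i j : Fin 3) (h : σ i = j) :
    pAct σ * wAct i * pAct σ⁻¹ = wAct j := by
  refine Equiv.ext fun x => Xext ?_ ?_
  · show (List.map ⇑σ (consR i (List.map ⇑(σ⁻¹) x.1.1))) = consR j x.1.1
    rw [map_consR, List.map_map, h]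
    simp [Equiv.Perm.inv_def, Equiv.self_comp_symm]
  · show σ * (σ⁻¹ * x.2) = x.2
    group

lemma hrels : ∀ r ∈ rels, FreeGroup.lift fgen r = 1 := by
  intro r hr
  have hsq : ∀ γ : Gen, FreeGroup.lift fgen ((FreeGroup.of γ) ^ 2) = fgen γ * fgen γ := by
    intro γ; simp [pow_two]
  have hconj : ∀ γ₁ γ₂ γ₃ : Gen,
      FreeGroup.lift fgen
        (FreeGroup.of γ₁ * FreeGroup.of γ₂ * FreeGroup.of γ₁ * (FreeGroup.of γ₃)⁻¹)
      = fgen γ₁ * fgen γ₂ * fgen γ₁ * (fgen γ₃)⁻¹ := by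
    intro γ₁ γ₂ γ₃; simp
  have hpsq : ∀ σ : P3, σ * σ = 1 → pAct σ * pAct σ = 1 := by
    intro σ h; rw [← pAct_mul, h, pAct_one]
  have hwconj : ∀ (σ : P3) (i j : Fin 3), σ * σ = 1 → σ i = j →
      ∀ γ₁ γ₂ γ₃ : Gen, fgen γ₁ = pAct σ → fgen γ₂ = wAct i → fgen γ₃ = wAct j →
      fgen γ₁ * fgen γ₂ * fgen γ₁ * (fgen γ₃)⁻¹ = 1 := by
    intro σ i j hσ hij γ₁ γ₂ γ₃ h1 h2 h3
    rw [h1, h2, h3, mul_inv_eq_one, ← relw σ i j hij,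
      show σ⁻¹ = σ from inv_eq_of_mul_eq_one_left hσ]
  rcases hr with rfl | rfl | rfl | rfl | rfl | rfl | rfl | rfl | rfl | rfl | rfl | hr
  · rw [hsq]; exact wAct_sq 0
  · rw [hsq]; exact wAct_sq 1
  · rw [hsq]; exact wAct_sq 2
  · rw [hsq]; exact hpsq sa (by decide)
  · rw [hsq]; exact hpsq sb (by decide)
  · show FreeGroup.lift fgen ((FreeGroup.of Gen.s12 * FreeGroup.of Gen.s13) ^ 3) = 1
    simp only [map_pow, map_mul, FreeGroup.lift_apply_of]
    show (pAct sa * pAct sb) ^ 3 = 1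
    rw [← pAct_mul]
    rw [show ∀ u : Equiv.Perm X, u ^ 3 = u * u * u from fun u => by rw [pow_succ, pow_succ, pow_one]]
    rw [← pAct_mul, ← pAct_mul]
    rw [show (sa * sb) * (sa * sb) * (sa * sb) = 1 by decide, pAct_one]
  · rw [hconj]; exact hwconj sa 0 1 (by decide) (by decide) _ _ _ rfl rfl rfl
  · rw [hconj]; exact hwconj sa 1 0 (by decide) (by decide) _ _ _ rfl rfl rfl
  · rw [hconj]; exact hwconj sa 2 2 (by decide) (by decide) _ _ _ rfl rfl rfl
  · rw [hconj]; exact hwconj sb 0 2 (by decide) (by decide) _ _ _ rfl rfl rfl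
  · rw [hconj]; exact hwconj sb 1 1 (by decide) (by decide) _ _ _ rfl rfl rfl
  · rw [Set.mem_singleton_iff] at hr; subst hr
    rw [hconj]; exact hwconj sb 2 0 (by decide) (by decide) _ _ _ rfl rfl rfl

def ρ : Wtilde →* Equiv.Perm X := PresentedGroup.toGroup hrels

@[simp] lemma ρ_of (γ : Gen) : ρ (PresentedGroup.of γ) = fgen γ := PresentedGroup.toGroup.of hrels

def b : Wtilde := PresentedGroup.of Gen.s12

def c : Wtilde := PresentedGroup.of Gen.s13

def gen : Fin 3 → Gen := ![Gen.w1, Gen.w2, Gen.w3]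

def w (i : Fin 3) : Wtilde := PresentedGroup.of (gen i)

lemma relq {r : FreeGroup Gen} (h : r ∈ rels) : PresentedGroup.mk rels r = 1 :=
  (QuotientGroup.eq_one_iff r).mpr (Subgroup.subset_normalClosure h)

lemma hb : b * b = 1 := by
  have := relq (show (FreeGroup.of Gen.s12) ^ 2 ∈ rels by
    simp [rels])
  rwa [map_pow, pow_two] at this

lemma hc : c * c = 1 := by
  have := relq (show (FreeGroup.of Gen.s13) ^ 2 ∈ rels by simp [rels])
  rwa [map_pow, pow_two] at this

lemma hw (i : Fin 3) : w i * w i = 1 := by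
  fin_cases i
  · have := relq (show (FreeGroup.of Gen.w1) ^ 2 ∈ rels by simp [rels])
    rwa [map_pow, pow_two] at this
  · have := relq (show (FreeGroup.of Gen.w2) ^ 2 ∈ rels by simp [rels])
    rwa [map_pow, pow_two] at this
  · have := relq (show (FreeGroup.of Gen.w3) ^ 2 ∈ rels by simp [rels])
    rwa [map_pow, pow_two] at this

lemma hb' (x : Wtilde) : b * (b * x) = x := by rw [← mul_assoc, hb, one_mul]
lemma hc' (x : Wtilde) : c * (c * x) = x := by rw [← mul_assoc, hc, one_mul]
lemma hw' (i : Fin 3) (x : Wtilde) : w i * (w i * x) = x := by rw [← mul_assoc, hw, one_mul]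

lemma hbinv : b⁻¹ = b := inv_eq_of_mul_eq_one_left hb
lemma hcinv : c⁻¹ = c := inv_eq_of_mul_eq_one_left hc

lemma hbc3 : (b * c) ^ 3 = 1 := by
  have := relq (show (FreeGroup.of Gen.s12 * FreeGroup.of Gen.s13) ^ 3 ∈ rels by simp [rels])
  rwa [map_pow, map_mul] at this

lemma hbcb : b * c * b = c * b * c := by
  have h2 : (b * c * b) * (c * b * c) = 1 := by
    rw [show (b*c*b) * (c*b*c) = (b*c)^3 by simp only [pow_succ, pow_zero, one_mul, pow_one, mul_assoc]]
    exact hbc3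
  rw [mul_eq_one_iff_eq_inv.mp h2, mul_inv_rev, mul_inv_rev, hbinv, hcinv, mul_assoc]

lemma conjb' (i : Fin 3) : w (sa i) = b * w i * b := by
  have key : ∀ (γ₂ γ₃ : Gen),
      (FreeGroup.of Gen.s12 * FreeGroup.of γ₂ * FreeGroup.of Gen.s12 * (FreeGroup.of γ₃)⁻¹) ∈ rels →
      (PresentedGroup.of γ₃ : Wtilde) = b * PresentedGroup.of γ₂ * b := by
    intro γ₂ γ₃ h
    have := relq h
    rw [map_mul, map_mul, map_mul, map_inv, mul_inv_eq_one] at this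
    exact this.symm
  fin_cases i
  · show w 1 = b * w 0 * b
    exact key Gen.w1 Gen.w2 (by simp [rels])
  · show w 0 = b * w 1 * b
    exact key Gen.w2 Gen.w1 (by simp [rels])
  · show w 2 = b * w 2 * b
    exact key Gen.w3 Gen.w3 (by simp [rels])

lemma conjc' (i : Fin 3) : w (sb i) = c * w i * c := by
  have key : ∀ (γ₂ γ₃ : Gen),
      (FreeGroup.of Gen.s13 * FreeGroup.of γ₂ * FreeGroup.of Gen.s13 * (FreeGroup.of γ₃)⁻¹) ∈ rels →
      (PresentedGroup.of γ₃ : Wtilde) = c * PresentedGroup.of γ₂ * c := by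
    intro γ₂ γ₃ h
    have := relq h
    rw [map_mul, map_mul, map_mul, map_inv, mul_inv_eq_one] at this
    exact this.symm
  fin_cases i
  · show w 2 = c * w 0 * c
    exact key Gen.w1 Gen.w3 (by simp [rels])
  · show w 1 = c * w 1 * c
    exact key Gen.w2 Gen.w2 (by simp [rels])
  · show w 0 = c * w 2 * c
    exact key Gen.w3 Gen.w1 (by simp [rels])


def permOf (τ : P3) : Wtilde :=
  if τ = 1 then 1 else if τ = sa then b else if τ = sb then c
  else if τ = sa * sb then b * c else if τ = sb * sa then c * b else b * c * b

lemma pO1 : permOf 1 = 1 := if_pos rfl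
lemma pOa : permOf sa = b := by rw [permOf, if_neg (by decide), if_pos rfl]
lemma pOb : permOf sb = c := by
  rw [permOf, if_neg (by decide), if_neg (by decide), if_pos rfl]
lemma pOab : permOf (sa * sb) = b * c := by
  rw [permOf, if_neg (by decide), if_neg (by decide), if_neg (by decide), if_pos rfl]
lemma pOba : permOf (sb * sa) = c * b := by
  rw [permOf, if_neg (by decide), if_neg (by decide), if_neg (by decide), if_neg (by decide),
    if_pos rfl]
lemma pOaba : permOf (sa * sb * sa) = b * c * b := by
  rw [permOf, if_neg (by decide), if_neg (by decide), if_neg (by decide), if_neg (by decide),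
    if_neg (by decide)]

lemma h6 (τ : P3) : τ = 1 ∨ τ = sa ∨ τ = sb ∨ τ = sa * sb ∨ τ = sb * sa ∨ τ = sa * sb * sa := by
  revert τ; decide

def wordOf (l : List (Fin 3)) : Wtilde := (l.map w).prod

@[simp] lemma wordOf_nil : wordOf [] = 1 := rfl
@[simp] lemma wordOf_cons (i : Fin 3) (l : List (Fin 3)) :
    wordOf (i :: l) = w i * wordOf l := by simp [wordOf]

lemma wordOf_consR (i : Fin 3) (l : List (Fin 3)) : wordOf (consR i l) = w i * wordOf l := by
  match l with
  | [] => simp [consR]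
  | j :: l' =>
    by_cases hji : j = i
    · subst hji
      rw [consR, if_pos rfl, wordOf_cons, ← mul_assoc, hw, one_mul]
    · rw [consR, if_neg hji, wordOf_cons, wordOf_cons]

lemma wordOf_map_sa (l : List (Fin 3)) : wordOf (l.map sa) = b * wordOf l * b := by
  induction l with
  | nil => simp only [List.map_nil, wordOf_nil, mul_one, hb]
  | cons i l' ih =>
    rw [List.map_cons, wordOf_cons, wordOf_cons, ih, conjb' i]
    simp only [mul_assoc, hb']

lemma wordOf_map_sb (l : List (Fin 3)) : wordOf (l.map sb) = c * wordOf l * c := by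
  induction l with
  | nil => simp only [List.map_nil, wordOf_nil, mul_one, hc]
  | cons i l' ih =>
    rw [List.map_cons, wordOf_cons, wordOf_cons, ih, conjc' i]
    simp only [mul_assoc, hc']

lemma permOf_sa (τ : P3) : permOf (sa * τ) = b * permOf τ := by
  rcases h6 τ with rfl | rfl | rfl | rfl | rfl | rfl
  · rw [mul_one, pOa, pO1, mul_one]
  · rw [show sa * sa = 1 by decide, pO1, pOa]; exact hb.symm
  · rw [pOab, pOb]
  · rw [show sa * (sa * sb) = sb by decide, pOb, pOab]; exact (hb' c).symm
  · rw [show sa * (sb * sa) = sa * sb * sa by rw [mul_assoc], pOaba, pOba, mul_assoc]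
  · rw [show sa * (sa * sb * sa) = sb * sa by decide, pOba, pOaba]
    simp only [mul_assoc, hb']

lemma permOf_sb (τ : P3) : permOf (sb * τ) = c * permOf τ := by
  rcases h6 τ with rfl | rfl | rfl | rfl | rfl | rfl
  · rw [mul_one, pOb, pO1, mul_one]
  · rw [show sb * sa = sb * sa from rfl, pOba, pOa]
  · rw [show sb * sb = 1 by decide, pO1, pOb]; exact hc.symm
  · rw [show sb * (sa * sb) = sa * sb * sa by decide, pOaba, pOab, hbcb, mul_assoc]
  · rw [show sb * (sb * sa) = sa by decide, pOa, pOba]; exact (hc' b).symm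
  · rw [show sb * (sa * sb * sa) = sa * sb by decide, pOab, pOaba, hbcb]
    simp only [mul_assoc, hc']

def redApp (l m : List (Fin 3)) : List (Fin 3) := l.foldr consR m

@[simp] lemma redApp_nil (m : List (Fin 3)) : redApp [] m = m := rfl
@[simp] lemma redApp_cons (i : Fin 3) (l m : List (Fin 3)) :
    redApp (i :: l) m = consR i (redApp l m) := rfl

lemma ch_redApp (l : List (Fin 3)) {m : List (Fin 3)} (h : Ch m) : Ch (redApp l m) := by
  induction l with
  | nil => exact h
  | cons i l' ih => exact ch_consR i ih

lemma fgen_gen (i : Fin 3) : fgen (gen i) = wAct i := by fin_cases i <;> rfl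

lemma ρ_w (i : Fin 3) (x : X) :
    ρ (w i) x = (⟨consR i x.1.1, ch_consR i x.1.2⟩, x.2) := by
  rw [w, ρ_of, fgen_gen]; rfl

lemma ρ_b (x : X) : ρ b x = (⟨x.1.1.map sa, ch_map sa x.1.2⟩, sa * x.2) := by
  rw [b, ρ_of]; rfl

lemma ρ_c (x : X) : ρ c x = (⟨x.1.1.map sb, ch_map sb x.1.2⟩, sb * x.2) := by
  rw [c, ρ_of]; rfl

lemma ρ_wordOf (l : List (Fin 3)) (x : X) :
    ρ (wordOf l) x = (⟨redApp l x.1.1, ch_redApp l x.1.2⟩, x.2) := by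
  induction l with
  | nil => rw [wordOf_nil, map_one]; exact Xext rfl rfl
  | cons i l' ih =>
    rw [wordOf_cons, map_mul, Equiv.Perm.mul_apply, ih, ρ_w]
    exact Xext rfl rfl

lemma ρ_permOf (τ : P3) (x : X) :
    ρ (permOf τ) x = (⟨x.1.1.map τ, ch_map τ x.1.2⟩, τ * x.2) := by
  rcases h6 τ with rfl | rfl | rfl | rfl | rfl | rfl
  · rw [pO1, map_one]
    refine Xext ?_ ?_
    · show x.1.1 = x.1.1.map ⇑(1 : P3)
      simp
    · show x.2 = 1 * x.2
      rw [one_mul]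
  · rw [pOa, ρ_b]
  · rw [pOb, ρ_c]
  · rw [pOab, map_mul, Equiv.Perm.mul_apply, ρ_c, ρ_b]
    exact Xext (by simp [List.map_map, Equiv.Perm.coe_mul]) (by simp [mul_assoc])
  · rw [pOba, map_mul, Equiv.Perm.mul_apply, ρ_b, ρ_c]
    exact Xext (by simp [List.map_map, Equiv.Perm.coe_mul]) (by simp [mul_assoc])
  · rw [pOaba, map_mul, map_mul, Equiv.Perm.mul_apply, Equiv.Perm.mul_apply, ρ_b, ρ_c, ρ_b]
    exact Xext (by simp [List.map_map, Equiv.Perm.coe_mul]) (by simp [mul_assoc])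

def interp (x : X) : Wtilde := wordOf x.1.1 * permOf x.2

lemma interp_gen (γ : Gen) (x : X) :
    interp (ρ (PresentedGroup.of γ) x) = PresentedGroup.of γ * interp x := by
  obtain ⟨⟨l, hl⟩, τ⟩ := x
  cases γ
  case s12 =>
    show interp (ρ b _) = b * _
    rw [ρ_b, interp, interp]
    show wordOf (l.map sa) * permOf (sa * τ) = b * (wordOf l * permOf τ)
    rw [wordOf_map_sa, permOf_sa]
    simp only [mul_assoc, hb']
  case s13 =>
    show interp (ρ c _) = c * _
    rw [ρ_c, interp, interp]
    show wordOf (l.map sb) * permOf (sb * τ) = c * (wordOf l * permOf τ)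
    rw [wordOf_map_sb, permOf_sb]
    simp only [mul_assoc, hc']
  case w1 =>
    show interp (ρ (w 0) _) = w 0 * _
    rw [ρ_w, interp, interp]
    show wordOf (consR 0 l) * permOf τ = w 0 * (wordOf l * permOf τ)
    rw [wordOf_consR, mul_assoc]
  case w2 =>
    show interp (ρ (w 1) _) = w 1 * _
    rw [ρ_w, interp, interp]
    show wordOf (consR 1 l) * permOf τ = w 1 * (wordOf l * permOf τ)
    rw [wordOf_consR, mul_assoc]
  case w3 =>
    show interp (ρ (w 2) _) = w 2 * _
    rw [ρ_w, interp, interp]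
    show wordOf (consR 2 l) * permOf τ = w 2 * (wordOf l * permOf τ)
    rw [wordOf_consR, mul_assoc]

lemma interp_ρ (g : Wtilde) (x : X) : interp (ρ g x) = g * interp x := by
  obtain ⟨z, rfl⟩ := PresentedGroup.mk_surjective rels g
  induction z using FreeGroup.induction_on generalizing x with
  | C1 => rw [map_one, map_one, one_mul, Equiv.Perm.one_apply]
  | of γ => exact interp_gen γ x
  | inv_of γ ih =>
    set u := PresentedGroup.mk rels (FreeGroup.of γ) with hu
    have h1 : ρ u (ρ (u⁻¹) x) = x := by
      rw [← Equiv.Perm.mul_apply, ← map_mul, mul_inv_cancel, map_one, Equiv.Perm.one_apply]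
    have h2 := ih (x := ρ (u⁻¹) x)
    rw [h1] at h2
    rw [map_inv, ← hu, eq_inv_mul_iff_mul_eq]
    exact h2.symm
  | mul z₁ z₂ ih₁ ih₂ =>
    rw [map_mul, map_mul, Equiv.Perm.mul_apply, ih₁, ih₂, mul_assoc]

def e : X := (⟨[], List.isChain_nil⟩, 1)

lemma interp_e : interp e = 1 := by rw [interp]; show 1 * permOf 1 = 1; rw [pO1, mul_one]

lemma interp_ev (g : Wtilde) : interp (ρ g e) = g := by rw [interp_ρ, interp_e, mul_one]


lemma ρ_t (x : X) :
    ρ t x = (⟨consR 1 (x.1.1.map pp), ch_consR 1 (ch_map pp x.1.2)⟩, pp * x.2) := by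
  rw [t, map_mul, map_mul, Equiv.Perm.mul_apply, Equiv.Perm.mul_apply, ρ_of, ρ_of, ρ_of]
  show (wAct 1) ((pAct sb) ((pAct sa) x)) = _
  refine Xext ?_ ?_
  · show consR 1 ((x.1.1.map ⇑sa).map ⇑sb) = consR 1 (x.1.1.map ⇑pp)
    rw [List.map_map, pp, Equiv.Perm.coe_mul]
  · show sb * (sa * x.2) = pp * x.2
    rw [pp, mul_assoc]

lemma ρ_tinv (x : X) :
    ρ t⁻¹ x = (⟨consR 0 (x.1.1.map ⇑(pp⁻¹)), ch_consR 0 (ch_map pp⁻¹ x.1.2)⟩, pp⁻¹ * x.2) := by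
  rw [map_inv]
  have := Equiv.symm_apply_eq (ρ t) (x := x)
    (y := (⟨consR 0 (x.1.1.map ⇑(pp⁻¹)), ch_consR 0 (ch_map pp⁻¹ x.1.2)⟩, pp⁻¹ * x.2))
  show (ρ t).symm x = _
  rw [this, ρ_t]
  refine (Xext ?_ ?_).symm
  · show consR 1 ((consR 0 (x.1.1.map ⇑(pp⁻¹))).map ⇑pp) = x.1.1
    rw [map_consR, List.map_map, show (⇑pp ∘ ⇑(pp⁻¹)) = id by
      funext u; simp, List.map_id, show pp 0 = 1 by decide]
    exact consR_consR 1 x.1.2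
  · show pp * (pp⁻¹ * x.2) = x.2
    group

def patP (σ : P3) : ℕ → Fin 3 → List (Fin 3)
  | 0, _ => []
  | n+1, s => s :: patP σ n (σ s)

lemma map_patP (σ : P3) (n : ℕ) (s : Fin 3) : (patP σ n s).map σ = patP σ n (σ s) := by
  induction n generalizing s with
  | zero => rfl
  | succ n ih => show σ s :: (patP σ n (σ s)).map σ = _; rw [ih (σ s)]; rfl

lemma consR_patP (σ : P3) (n : ℕ) (i s : Fin 3) (hne : s ≠ i) :
    consR i (patP σ n s) = i :: patP σ n s := by
  cases n with
  | zero => rfl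
  | succ n => show consR i (s :: _) = _; simp [consR, patP, hne]

lemma pattern_of_eq (σ : P3) (l : List (Fin 3)) : ∀ (a h0 : Fin 3),
    l ++ [a] = h0 :: l.map σ → l = patP σ l.length h0 ∧ a = (σ ^ l.length) h0 := by
  induction l with
  | nil =>
    intro a h0 h
    simp only [List.nil_append, List.map_nil] at h
    obtain rfl : a = h0 := by injection h
    exact ⟨rfl, by rw [List.length_nil, pow_zero]; rfl⟩
  | cons x l' ih =>
    intro a h0 h
    rw [List.cons_append, List.map_cons] at h
    obtain ⟨rfl, h2⟩ : x = h0 ∧ l' ++ [a] = σ x :: l'.map σ := by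
      injection h with hh ht; exact ⟨hh, ht⟩
    obtain ⟨h3, h4⟩ := ih a (σ x) h2
    refine ⟨?_, ?_⟩
    · show x :: l' = patP σ (l'.length + 1) x
      rw [patP, ← h3]
    · rw [List.length_cons, h4, pow_succ, Equiv.Perm.mul_apply]

lemma redApp_single (a : Fin 3) (l : List (Fin 3)) (h : Ch l) :
    redApp l [a] = l ++ [a] ∨ ∃ l', l = l' ++ [a] ∧ redApp l [a] = l' := by
  induction l with
  | nil => exact Or.inl rfl
  | cons x l' ih =>
    rcases ih h.tail with h1 | ⟨l'', hl'', h2⟩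
    · rw [redApp_cons, h1]
      cases l' with
      | nil =>
        by_cases hax : x = a
        · subst hax; right; exact ⟨[], rfl, by simp [consR]⟩
        · left
          show consR x [a] = [x, a]
          simp [consR, Ne.symm hax]
      | cons y m =>
        have hxy : x ≠ y := h.rel_head
        left
        show consR x (y :: (m ++ [a])) = x :: y :: m ++ [a]
        simp [consR, Ne.symm hxy]
    · subst hl''
      rw [redApp_cons, h2]
      right
      cases l'' with
      | nil => exact ⟨[x], rfl, by simp [consR]⟩
      | cons z m' =>
        have hxz : x ≠ z := h.rel_head
        exact ⟨x :: z :: m', rfl, by simp [consR, Ne.symm hxz]⟩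

lemma pow3 (σ : P3) (hσ : σ ^ 3 = 1) (k : ℕ) : σ ^ k = σ ^ (k % 3) := by
  conv_lhs => rw [← Nat.div_add_mod k 3]
  rw [pow_add, pow_mul, hσ, one_pow, one_mul]

lemma tau_id_pos (τ : P3) (k : ℕ) (hτ : τ = 1 ∨ τ = pp ∨ τ = pp * pp)
    (hval : τ 1 = (pp ^ k) 1) : τ = pp ^ k := by
  rw [pow3 pp (by decide)] at hval ⊢
  have h3 : k % 3 = 0 ∨ k % 3 = 1 ∨ k % 3 = 2 := by omega
  rcases h3 with h | h | h <;> rw [h] at hval ⊢ <;>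
    rcases hτ with rfl | rfl | rfl <;> revert hval <;> decide

lemma tau_id_neg (τ : P3) (k : ℕ) (hτ : τ = 1 ∨ τ = pp ∨ τ = pp * pp)
    (hval : τ 0 = (pp⁻¹ ^ k) 0) : τ = pp⁻¹ ^ k := by
  rw [pow3 pp⁻¹ (by decide)] at hval ⊢
  have h3 : k % 3 = 0 ∨ k % 3 = 1 ∨ k % 3 = 2 := by omega
  rcases h3 with h | h | h <;> rw [h] at hval ⊢ <;>
    rcases hτ with rfl | rfl | rfl <;> revert hval <;> decide

lemma ev_t_pow (k : ℕ) :
    (ρ (t ^ k) e).1.1 = patP pp k 1 ∧ (ρ (t ^ k) e).2 = pp ^ k := by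
  induction k with
  | zero => rw [pow_zero, map_one]; exact ⟨rfl, rfl⟩
  | succ k ih =>
    rw [pow_succ', map_mul, Equiv.Perm.mul_apply, ρ_t]
    constructor
    · show consR 1 ((ρ (t ^ k) e).1.1.map ⇑pp) = _
      rw [ih.1, map_patP, show pp 1 = 2 by decide, consR_patP pp k 1 2 (by decide)]
      rfl
    · show pp * (ρ (t ^ k) e).2 = pp ^ (k + 1)
      rw [ih.2, ← pow_succ']

lemma ev_tinv_pow (k : ℕ) :
    (ρ ((t⁻¹) ^ k) e).1.1 = patP pp⁻¹ k 0 ∧ (ρ ((t⁻¹) ^ k) e).2 = pp⁻¹ ^ k := by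
  induction k with
  | zero => rw [pow_zero, map_one]; exact ⟨rfl, rfl⟩
  | succ k ih =>
    rw [pow_succ', map_mul, Equiv.Perm.mul_apply, ρ_tinv]
    constructor
    · show consR 0 ((ρ ((t⁻¹) ^ k) e).1.1.map ⇑(pp⁻¹)) = _
      rw [ih.1, map_patP, show pp⁻¹ 0 = 2 by decide, consR_patP pp⁻¹ k 0 2 (by decide)]
      rfl
    · show pp⁻¹ * (ρ ((t⁻¹) ^ k) e).2 = pp⁻¹ ^ (k + 1)
      rw [ih.2, ← pow_succ']

end HVaux

section
open HVaux

/-- An element of `W̃` commutes with `t = w2·σ13·σ12` iff it is an integer power of `t`: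
the centralizer of `t` in `W̃` is the cyclic subgroup generated by `t`. -/
theorem centralizer_of_t (g : Wtilde) : Commute g t ↔ ∃ m : ℤ, g = t ^ m := by
  constructor
  · intro hcomm
    rcases hE : ρ g e with ⟨⟨l, hl⟩, τ⟩
    have hTe : ρ t e = ((⟨[1], List.isChain_singleton 1⟩ : {l : List (Fin 3) // Ch l}), pp) := by
      rw [ρ_t]; exact Xext rfl (mul_one pp)
    have hTie : ρ t⁻¹ e =
        ((⟨[0], List.isChain_singleton 0⟩ : {l : List (Fin 3) // Ch l}), pp⁻¹) := by
      rw [ρ_tinv]; exact Xext rfl (mul_one _)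
    have hgi : ρ g = ρ (wordOf l * permOf τ) := by
      have hg2 : g = wordOf l * permOf τ := by rw [← interp_ev g, hE]; rfl
      rw [hg2]
    have h1 : ρ g (ρ t e) = ρ t (ρ g e) := by
      rw [← Equiv.Perm.mul_apply, ← Equiv.Perm.mul_apply, ← map_mul, ← map_mul, hcomm.eq]
    have h1' : ρ g (ρ t⁻¹ e) = ρ t⁻¹ (ρ g e) := by
      rw [← Equiv.Perm.mul_apply, ← Equiv.Perm.mul_apply, ← map_mul, ← map_mul,
        hcomm.inv_right.eq]
    rw [hTe, hE, hgi, map_mul, Equiv.Perm.mul_apply, ρ_permOf, ρ_wordOf, ρ_t] at h1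
    rw [hTie, hE, hgi, map_mul, Equiv.Perm.mul_apply, ρ_permOf, ρ_wordOf, ρ_tinv] at h1'
    have E1 : redApp l ([1].map ⇑τ) = consR 1 (l.map ⇑pp) :=
      congrArg (fun y : X => y.1.1) h1
    have E2 : τ * pp = pp * τ := congrArg (fun y : X => y.2) h1
    have E1' : redApp l ([0].map ⇑τ) = consR 0 (l.map ⇑(pp⁻¹)) :=
      congrArg (fun y : X => y.1.1) h1'
    simp only [List.map_cons, List.map_nil] at E1 E1'
    have hτ : τ = 1 ∨ τ = pp ∨ τ = pp * pp :=
      (by decide : ∀ σ : P3, σ * pp = pp * σ → σ = 1 ∨ σ = pp ∨ σ = pp * pp) τ E2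
    by_cases h0 : l.head? = some (0 : Fin 3)
    · -- negative powers
      have hcons : consR 0 (l.map ⇑(pp⁻¹)) = 0 :: l.map ⇑(pp⁻¹) := by
        cases l with
        | nil => rfl
        | cons z m =>
          have hz : z = 0 := by simpa using h0
          subst hz
          rw [List.map_cons, show (pp⁻¹ : P3) 0 = 2 by decide]
          simp [consR, show (2 : Fin 3) ≠ 0 by decide]
      rcases redApp_single (τ 0) l hl with hred | ⟨l', rfl, hred⟩
      · rw [hred, hcons] at E1'
        obtain ⟨hpat, hval⟩ := pattern_of_eq pp⁻¹ l (τ 0) 0 E1'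
        have hτk : τ = pp⁻¹ ^ l.length := tau_id_neg τ l.length hτ hval
        refine ⟨-(l.length : ℤ), ?_⟩
        have hg : g = (t⁻¹) ^ l.length := by
          rw [← interp_ev g, ← interp_ev ((t⁻¹) ^ l.length), hE]
          congr 1
          refine Xext ?_ ?_
          · rw [(ev_tinv_pow l.length).1]; exact hpat
          · rw [(ev_tinv_pow l.length).2]; exact hτk
        rw [zpow_neg, zpow_natCast, ← inv_pow]; exact hg
      · rw [hred, hcons] at E1'
        have hlen := congrArg List.length E1'
        simp [List.length_append] at hlen
        omega
    · -- nonnegative powers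
      have hcons : consR 1 (l.map ⇑pp) = 1 :: l.map ⇑pp := by
        cases l with
        | nil => rfl
        | cons z m =>
          have hz : z ≠ 0 := by
            intro h; exact h0 (by rw [h]; rfl)
          rw [List.map_cons]
          have hne : pp z ≠ 1 := by revert hz; fin_cases z <;> decide
          simp [consR, hne]
      rcases redApp_single (τ 1) l hl with hred | ⟨l', rfl, hred⟩
      · rw [hred, hcons] at E1
        obtain ⟨hpat, hval⟩ := pattern_of_eq pp l (τ 1) 1 E1
        have hτk : τ = pp ^ l.length := tau_id_pos τ l.length hτ hval
        refine ⟨(l.length : ℤ), ?_⟩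
        have hg : g = t ^ l.length := by
          rw [← interp_ev g, ← interp_ev (t ^ l.length), hE]
          congr 1
          refine Xext ?_ ?_
          · rw [(ev_t_pow l.length).1]; exact hpat
          · rw [(ev_t_pow l.length).2]; exact hτk
        rw [zpow_natCast]; exact hg
      · rw [hred, hcons] at E1
        have hlen := congrArg List.length E1
        simp [List.length_append] at hlen
        omega
  · rintro ⟨m, rfl⟩
    exact (Commute.refl t).zpow_left m

end
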